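/- arXiv:2307.10905 — 4 statements merged into one kernel-verified Lean document; each statement's English description precedes it below -/
import Mathlib

section
/- Let λ : [0,1] → ℝ be continuous with λ(t) ≥ 0 for all t ∈ [0,1], and let ε > 0. Then there exists a continuously differentiable bijection σ : [0,1] → [0,1] with σ(0) = 0, σ(1) = 1 and σ'(t) > 0 for every t ∈ [0,1] (i.e. a C¹ diffeomorphism of [0,1] fixing the endpoints), such that λ(σ(t))·σ'(t) < ∫₀¹ λ(s) ds + ε for every t ∈ [0,1]. -/
open Set Filter intervalIntegral

/-- Reparametrization lemma (Section 3 of the paper): for a continuous nonnegative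
`l : [0,1] → ℝ` and `ε > 0`, there is a C¹ diffeomorphism `σ` of `[0,1]` fixing the
endpoints such that `l (σ t) * σ' t < ∫₀¹ l + ε` for all `t ∈ [0,1]`. -/
theorem stmt_0 (l : ℝ → ℝ) (hl : ContinuousOn l (Set.Icc 0 1))
    (hl0 : ∀ t ∈ Set.Icc (0:ℝ) 1, 0 ≤ l t) (ε : ℝ) (hε : 0 < ε) :
    ∃ σ σ' : ℝ → ℝ,
      σ 0 = 0 ∧ σ 1 = 1 ∧
      Set.BijOn σ (Set.Icc 0 1) (Set.Icc 0 1) ∧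
      (∀ t ∈ Set.Icc (0:ℝ) 1, HasDerivWithinAt σ (σ' t) (Set.Icc 0 1) t) ∧
      ContinuousOn σ' (Set.Icc 0 1) ∧
      (∀ t ∈ Set.Icc (0:ℝ) 1, 0 < σ' t) ∧
      (∀ t ∈ Set.Icc (0:ℝ) 1, l (σ t) * σ' t < (∫ s in (0:ℝ)..1, l s) + ε) := by
  -- projection to [0,1]
  set proj : ℝ → ℝ := fun t => max 0 (min 1 t) with hproj
  have proj_mem : ∀ t, proj t ∈ Icc (0:ℝ) 1 := fun t =>
    ⟨le_max_left _ _, max_le zero_le_one (min_le_left _ _)⟩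
  have proj_id : ∀ t ∈ Icc (0:ℝ) 1, proj t = t := by
    intro t ht
    simp [hproj, min_eq_right ht.2, max_eq_right ht.1]
  have proj_cont : Continuous proj := by fun_prop
  -- extended integrand
  set g : ℝ → ℝ := fun t => l (proj t) + ε with hg
  have g_cont : Continuous g :=
    (hl.comp_continuous proj_cont proj_mem).add continuous_const
  have g_pos : ∀ t, 0 < g t := fun t =>
    add_pos_of_nonneg_of_pos (hl0 _ (proj_mem t)) hε
  have g_ge : ∀ t, ε ≤ g t := fun t => le_add_of_nonneg_left (hl0 _ (proj_mem t))
  set C : ℝ := ∫ s in (0:ℝ)..1, g s with hC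
  have hCval : C = (∫ s in (0:ℝ)..1, l s) + ε := by
    rw [hC]
    have h1 : (∫ s in (0:ℝ)..1, g s) =
        (∫ s in (0:ℝ)..1, l (proj s)) + ∫ s in (0:ℝ)..1, (ε:ℝ) := by
      apply intervalIntegral.integral_add
      · exact ((hl.comp_continuous proj_cont proj_mem)).intervalIntegrable _ _
      · exact intervalIntegrable_const
    have h2 : (∫ s in (0:ℝ)..1, l (proj s)) = ∫ s in (0:ℝ)..1, l s := by
      apply intervalIntegral.integral_congr
      intro x hx
      rw [uIcc_of_le (by norm_num : (0:ℝ) ≤ 1)] at hx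
      show l (proj x) = l x
      rw [proj_id x hx]
    simp [h1, h2]
  have hintl : (0:ℝ) ≤ ∫ s in (0:ℝ)..1, l s := by
    apply intervalIntegral.integral_nonneg (by norm_num)
    intro u hu; exact hl0 u hu
  have hCpos : 0 < C := by rw [hCval]; linarith
  -- the function F
  set F : ℝ → ℝ := fun t => (∫ s in (0:ℝ)..t, g s) / C with hF
  have hFderiv : ∀ t, HasDerivAt F (g t / C) t := fun t =>
    ((intervalIntegral.integral_hasDerivAt_right
      (g_cont.intervalIntegrable 0 t) (g_cont.stronglyMeasurableAtFilter _ _)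
      g_cont.continuousAt)).div_const C
  have hFmono : StrictMono F := by
    apply strictMono_of_deriv_pos
    intro x
    rw [(hFderiv x).deriv]
    exact div_pos (g_pos x) hCpos
  have hFcont : Continuous F := by
    have : Differentiable ℝ F := fun x => (hFderiv x).differentiableAt
    exact this.continuous
  have hF0 : F 0 = 0 := by simp [hF]
  have hF1 : F 1 = 1 := by
    simp only [hF]
    rw [← hC, div_self hCpos.ne']
  -- F grows at least linearly
  have hεC : 0 < ε / C := div_pos hε hCpos
  have hFbound_top : ∀ t : ℝ, 0 ≤ t → (ε / C) * t ≤ F t := by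
    intro t ht
    have h1 : ε * t ≤ ∫ s in (0:ℝ)..t, g s := by
      have := intervalIntegral.integral_mono_on ht
        (intervalIntegrable_const : IntervalIntegrable (fun _ => ε) MeasureTheory.volume 0 t)
        (g_cont.intervalIntegrable 0 t) (fun u _ => g_ge u)
      simpa [mul_comm] using this
    calc (ε / C) * t = (ε * t) / C := by ring
      _ ≤ (∫ s in (0:ℝ)..t, g s) / C := by gcongr
      _ = F t := rfl
  have hFbound_bot : ∀ t : ℝ, t ≤ 0 → F t ≤ (ε / C) * t := by
    intro t ht
    have h1 : (∫ s in (0:ℝ)..t, g s) ≤ ε * t := by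
      have h2 : ε * (0 - t) ≤ ∫ s in t..(0:ℝ), g s := by
        have := intervalIntegral.integral_mono_on ht
          (intervalIntegrable_const : IntervalIntegrable (fun _ => ε) MeasureTheory.volume t 0)
          (g_cont.intervalIntegrable t 0) (fun u _ => g_ge u)
        simpa [mul_comm] using this
      have h3 : (∫ s in (0:ℝ)..t, g s) = -∫ s in t..(0:ℝ), g s :=
        (intervalIntegral.integral_symm t 0)
      rw [h3]; nlinarith
    calc F t = (∫ s in (0:ℝ)..t, g s) / C := rfl
      _ ≤ (ε * t) / C := by gcongr
      _ = (ε / C) * t := by ring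
  have htop : Tendsto F atTop atTop := by
    have hlin : Tendsto (fun t : ℝ => (ε / C) * t) atTop atTop :=
      Tendsto.const_mul_atTop hεC tendsto_id
    exact tendsto_atTop_mono' atTop
      ((eventually_ge_atTop 0).mono fun t ht => hFbound_top t ht) hlin
  have hbot : Tendsto F atBot atBot := by
    have hlin : Tendsto (fun t : ℝ => (ε / C) * t) atBot atBot :=
      Tendsto.const_mul_atBot hεC tendsto_id
    exact tendsto_atBot_mono' atBot
      ((eventually_le_atBot 0).mono fun t ht => hFbound_bot t ht) hlin
  have hsurj : Function.Surjective F := hFcont.surjective htop hbot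
  -- the inverse
  set e : ℝ ≃o ℝ := StrictMono.orderIsoOfSurjective F hFmono hsurj with he
  set σ : ℝ → ℝ := fun t => e.symm t with hσ
  have hFe : ∀ x, F x = e x := fun x => rfl
  have hσF : ∀ x, σ (F x) = x := fun x => by
    rw [hσ, hFe]; exact e.symm_apply_apply x
  have hFσ : ∀ y, F (σ y) = y := fun y => by
    rw [hσ, hFe]; exact e.apply_symm_apply y
  have hσcont : Continuous σ := by
    rw [hσ]
    exact (OrderIso.continuous e.symm)
  have hσmono : StrictMono σ := fun a b hab => by
    exact e.symm.strictMono hab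
  have hσ0 : σ 0 = 0 := by have := hσF 0; rw [hF0] at this; exact this
  have hσ1 : σ 1 = 1 := by have := hσF 1; rw [hF1] at this; exact this
  -- derivative of σ
  set σ' : ℝ → ℝ := fun t => (g (σ t) / C)⁻¹ with hσ'
  have hσderiv : ∀ t, HasDerivAt σ (σ' t) t := by
    intro t
    apply HasDerivAt.of_local_left_inverse hσcont.continuousAt (hFderiv (σ t))
      (div_pos (g_pos _) hCpos).ne'
    exact Eventually.of_forall hFσ
  have hσ'pos : ∀ t, 0 < σ' t := fun t =>
    inv_pos.mpr (div_pos (g_pos _) hCpos)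
  have hσmem : ∀ t ∈ Icc (0:ℝ) 1, σ t ∈ Icc (0:ℝ) 1 := by
    intro t ht
    constructor
    · rw [← hσ0]; exact hσmono.monotone ht.1
    · rw [← hσ1]; exact hσmono.monotone ht.2
  refine ⟨σ, σ', hσ0, hσ1, ?_, fun t ht => (hσderiv t).hasDerivWithinAt, ?_, fun t _ => hσ'pos t, ?_⟩
  · refine ⟨hσmem, hσmono.injective.injOn, ?_⟩
    intro y hy
    refine ⟨F y, ?_, hσF y⟩
    constructor
    · rw [← hF0]; exact hFmono.monotone hy.1
    · rw [← hF1]; exact hFmono.monotone hy.2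
  · apply Continuous.continuousOn
    exact ((g_cont.comp hσcont).div_const C).inv₀ fun t =>
      (div_pos (g_pos _) hCpos).ne'
  · intro t ht
    have hmem := hσmem t ht
    have hgval : g (σ t) = l (σ t) + ε := by
      rw [hg]; simp only; rw [proj_id _ hmem]
    have hlpos : 0 ≤ l (σ t) := hl0 _ hmem
    have : l (σ t) * σ' t = l (σ t) * C / (l (σ t) + ε) := by
      simp only [hσ']
      rw [hgval]
      field_simp
    rw [this, ← hCval]
    rw [div_lt_iff₀ (by linarith)]
    nlinarith
end

section
/- Let X be a set and δ : X × X → ℝ satisfy the triangle inequality, set d(x,y) := max{δ(x,y), δ(y,x), 0} and τ(x,y) := max{−δ(x,y), 0}. Then τ(x,y) ≤ d(x,y) for all x, y ∈ X, and τ is 1-Lipschitz with respect to d in each argument: |τ(x,y) − τ(x,y')| ≤ d(y,y') and |τ(x,y) − τ(x',y)| ≤ d(x,x') for all x, x', y, y' ∈ X. -/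
/-- If `δ` satisfies the triangle inequality, `d x y := max {δ x y, δ y x, 0}` and
`τ x y := max {-δ x y, 0}`, then `τ ≤ d` and `τ` is 1-Lipschitz with respect to `d`
in both arguments. -/
theorem stmt_3 {X : Type*} (δ : X → X → ℝ)
    (htri : ∀ x y z, δ x z ≤ δ x y + δ y z) :
    (∀ x y : X, max (-δ x y) 0 ≤ max (max (δ x y) (δ y x)) 0) ∧
    (∀ x x' y y' : X,
      |max (-δ x y) 0 - max (-δ x y') 0| ≤ max (max (δ y y') (δ y' y)) 0 ∧
      |max (-δ x y) 0 - max (-δ x' y) 0| ≤ max (max (δ x x') (δ x' x)) 0) := by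
  have hself : ∀ x : X, 0 ≤ δ x x := by
    intro x; have := htri x x x; linarith
  have hsum : ∀ x y : X, 0 ≤ δ x y + δ y x := by
    intro x y; have := htri x y x; have := hself x; linarith
  constructor
  · intro x y
    have h := hsum x y
    simp only [max_def]; split_ifs <;> linarith
  · intro x x' y y'
    constructor
    · have h1 := htri x y y'
      have h2 := htri x y' y
      rw [abs_sub_le_iff]
      constructor <;> (simp only [max_def]; split_ifs <;> linarith)
    · have h1 := htri x' x y
      have h2 := htri x x' y
      rw [abs_sub_le_iff]
      constructor <;> (simp only [max_def]; split_ifs <;> linarith)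
end

section
/- Let G be a group with a right-invariant pseudometric d. Let f₁, f₂, h ∈ G and C₁, C₂ ≥ 0 be such that d(f₁·x, f₁·y) ≤ C₁·d(x,y) and d(f₂⁻¹·x, f₂⁻¹·y) ≤ C₂·d(x,y) for all x, y ∈ G, and assume that the element h⁻¹f₁⁻¹h commutes with f₁⁻¹f₂f₁. Then the commutator [f₁, f₂] := f₂⁻¹f₁⁻¹f₂f₁ satisfies d([f₁,f₂], 1) ≤ (1 + C₂)(1 + C₁)·d(h, 1). -/
/-- Eliashberg–Polterovich commutator estimate: for a right-invariant pseudometric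
`d` on a group `G`, elements `f₁, f₂, h` with left-Lipschitz constants `C₁` for `f₁`
and `C₂` for `f₂⁻¹`, such that `h⁻¹f₁⁻¹h` commutes with `f₁⁻¹f₂f₁`, the commutator
`[f₁,f₂] = f₂⁻¹f₁⁻¹f₂f₁` satisfies `d([f₁,f₂],1) ≤ (1+C₂)(1+C₁) d(h,1)`. -/
theorem stmt_8 {G : Type*} [Group G] (d : G → G → ℝ)
    (hrefl : ∀ g, d g g = 0)
    (hsymm : ∀ g h, d g h = d h g)
    (htri : ∀ g h k, d g k ≤ d g h + d h k)
    (hright : ∀ g h k, d (g * k) (h * k) = d g h)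
    (f₁ f₂ h : G) (C₁ C₂ : ℝ) (hC₁ : 0 ≤ C₁) (hC₂ : 0 ≤ C₂)
    (hlip₁ : ∀ x y : G, d (f₁ * x) (f₁ * y) ≤ C₁ * d x y)
    (hlip₂ : ∀ x y : G, d (f₂⁻¹ * x) (f₂⁻¹ * y) ≤ C₂ * d x y)
    (hcomm : Commute (h⁻¹ * f₁⁻¹ * h) (f₁⁻¹ * f₂ * f₁)) :
    d (f₂⁻¹ * f₁⁻¹ * f₂ * f₁) 1 ≤ (1 + C₂) * (1 + C₁) * d h 1 := by
  -- basic lemmas about the pseudometric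
  have hmul : ∀ x y : G, d (x * y) 1 ≤ d x 1 + d y 1 := by
    intro x y
    have h1 : d (x * y) y ≤ d (x * y) 1 + d 1 y := htri _ _ _
    have h2 : d (x * y) (1 * y) = d x 1 := hright x 1 y
    rw [one_mul] at h2
    have h3 : d (x * y) 1 ≤ d (x * y) y + d y 1 := htri _ _ _
    rw [h2] at h3
    linarith [h3]
  have hinv : ∀ x : G, d x⁻¹ 1 = d x 1 := by
    intro x
    have := hright x⁻¹ 1 x
    rw [inv_mul_cancel, one_mul] at this
    rw [← this, hsymm]
  have hconj₁ : ∀ x : G, d (f₁ * x * f₁⁻¹) 1 ≤ C₁ * d x 1 := by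
    intro x
    have h1 : d (f₁ * x * f₁⁻¹ * f₁) (1 * f₁) = d (f₁ * x * f₁⁻¹) 1 := hright _ _ _
    have h2 : f₁ * x * f₁⁻¹ * f₁ = f₁ * x := by group
    have h3 : (1 : G) * f₁ = f₁ * 1 := by group
    rw [h2, h3] at h1
    rw [← h1]
    exact hlip₁ x 1
  have hconj₂ : ∀ x : G, d (f₂⁻¹ * x * f₂) 1 ≤ C₂ * d x 1 := by
    intro x
    have h1 : d (f₂⁻¹ * x * f₂ * f₂⁻¹) (1 * f₂⁻¹) = d (f₂⁻¹ * x * f₂) 1 := hright _ _ _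
    have h2 : f₂⁻¹ * x * f₂ * f₂⁻¹ = f₂⁻¹ * x := by group
    have h3 : (1 : G) * f₂⁻¹ = f₂⁻¹ * 1 := by group
    rw [h2, h3] at h1
    rw [← h1]
    exact hlip₂ x 1
  have hnn : 0 ≤ d h 1 := by
    have h1 : d h h ≤ d h 1 + d 1 h := htri _ _ _
    rw [hrefl, hsymm 1 h] at h1
    linarith
  -- the key algebraic identity, using hcomm
  set ψ : G := h⁻¹ * (f₁ * h * f₁⁻¹) with hψ
  set φ : G := f₁ * h⁻¹ * f₁⁻¹ * h with hφ
  have key : f₂⁻¹ * f₁⁻¹ * f₂ * f₁ = (f₂⁻¹ * ψ * f₂) * φ := by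
    have hci : (h⁻¹ * f₁⁻¹ * h)⁻¹ * (f₁⁻¹ * f₂ * f₁) =
        (f₁⁻¹ * f₂ * f₁) * (h⁻¹ * f₁⁻¹ * h)⁻¹ := (hcomm.inv_left).eq
    have e1 : (f₂⁻¹ * ψ * f₂) * φ =
        f₂⁻¹ * (((h⁻¹ * f₁⁻¹ * h)⁻¹ * (f₁⁻¹ * f₂ * f₁)) * (h⁻¹ * f₁⁻¹ * h)) := by
      rw [hψ, hφ]; group
    rw [hci] at e1
    rw [e1]; group
  -- bounds on the two pieces
  have bψ : d ψ 1 ≤ (1 + C₁) * d h 1 := by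
    have b1 : d ψ 1 ≤ d h⁻¹ 1 + d (f₁ * h * f₁⁻¹) 1 := hmul _ _
    have b2 : d (f₁ * h * f₁⁻¹) 1 ≤ C₁ * d h 1 := hconj₁ h
    rw [hinv] at b1
    nlinarith
  have bφ : d φ 1 ≤ (1 + C₁) * d h 1 := by
    have e : φ = (f₁ * h⁻¹ * f₁⁻¹) * h := by rw [hφ]
    have b1 : d φ 1 ≤ d (f₁ * h⁻¹ * f₁⁻¹) 1 + d h 1 := by rw [e]; exact hmul _ _
    have b2 : d (f₁ * h⁻¹ * f₁⁻¹) 1 ≤ C₁ * d h⁻¹ 1 := hconj₁ h⁻¹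
    rw [hinv] at b2
    nlinarith
  -- put it together
  rw [key]
  have b3 : d ((f₂⁻¹ * ψ * f₂) * φ) 1 ≤ d (f₂⁻¹ * ψ * f₂) 1 + d φ 1 := hmul _ _
  have b4 : d (f₂⁻¹ * ψ * f₂) 1 ≤ C₂ * d ψ 1 := hconj₂ ψ
  have b5 : C₂ * d ψ 1 ≤ C₂ * ((1 + C₁) * d h 1) := by
    exact mul_le_mul_of_nonneg_left bψ hC₂
  nlinarith
end

section
/- Let λ : [0,1] → ℝ be continuous with λ(t) ≥ 0 for all t. Then the infimum, taken over all continuously differentiable bijections σ : [0,1] → [0,1] with σ(0) = 0, σ(1) = 1 and σ'(t) > 0 for all t, of sup_{t ∈ [0,1]} λ(σ(t))·σ'(t), is equal to ∫₀¹ λ(t) dt. -/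
/-!
Change of variables gives `∫₀¹ l = ∫₀¹ l (σ t) σ' t dt ≤ sup_t l (σ t) σ' t` for every
reparametrization `σ`. Conversely, for `ε > 0` let `σ` be the inverse of the normalized primitive
`τ s = (∫₀ˢ (l + ε)) / (∫₀¹ (l + ε))`; then `l (σ t) σ' t = (∫₀¹ l + ε) · l / (l + ε)` at `σ t`,
which is at most `∫₀¹ l + ε`.
-/

open Set Filter intervalIntegral

def reparamSupSet (l : ℝ → ℝ) : Set ℝ :=
  {r : ℝ | ∃ σ σ' : ℝ → ℝ,
    σ 0 = 0 ∧ σ 1 = 1 ∧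
    Set.BijOn σ (Set.Icc 0 1) (Set.Icc 0 1) ∧
    (∀ t ∈ Set.Icc (0:ℝ) 1, HasDerivWithinAt σ (σ' t) (Set.Icc 0 1) t) ∧
    ContinuousOn σ' (Set.Icc 0 1) ∧
    (∀ t ∈ Set.Icc (0:ℝ) 1, 0 < σ' t) ∧
    r = sSup ((fun t => l (σ t) * σ' t) '' Set.Icc 0 1)}

theorem integral_comp_le_mul_sSup {a b : ℝ} (hab : a ≤ b) {l σ σ' : ℝ → ℝ}
    (hσ : ∀ t ∈ Icc a b, HasDerivWithinAt σ (σ' t) (Icc a b) t)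
    (hσ' : ContinuousOn σ' (Icc a b)) (hl : ContinuousOn l (σ '' Icc a b)) :
    ∫ u in σ a..σ b, l u ≤ (b - a) * sSup ((fun t => l (σ t) * σ' t) '' Icc a b) := by
  have hσc : ContinuousOn σ (Icc a b) := fun t ht => (hσ t ht).continuousWithinAt
  have hfc : ContinuousOn (fun t => l (σ t) * σ' t) (Icc a b) :=
    (hl.comp hσc (mapsTo_image σ _)).mul hσ'
  have hbdd := (isCompact_Icc.image_of_continuousOn hfc).bddAbove
  rw [← uIcc_of_le hab] at hσc hσ' hl hfc
  have hcov : ∫ t in a..b, (l ∘ σ) t * σ' t = ∫ u in σ a..σ b, l u := by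
    refine integral_comp_mul_deriv'' hσc (fun t ht => ?_) hσ' hl
    rw [min_eq_left hab, max_eq_right hab] at ht
    exact ((hσ t (Ioo_subset_Icc_self ht)).hasDerivAt (Icc_mem_nhds ht.1 ht.2)).hasDerivWithinAt
  rw [← hcov, ← smul_eq_mul, ← integral_const]
  exact integral_mono_on hab hfc.intervalIntegrable intervalIntegrable_const
    fun t ht => le_csSup hbdd (mem_image_of_mem _ ht)

theorem integral_le_of_mem_reparamSupSet {l : ℝ → ℝ} (hl : ContinuousOn l (Icc 0 1)) {r : ℝ}
    (hr : r ∈ reparamSupSet l) : ∫ t in (0:ℝ)..1, l t ≤ r := by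
  obtain ⟨σ, σ', h0, h1, hbij, hσ, hσ', -, rfl⟩ := hr
  have := integral_comp_le_mul_sSup zero_le_one hσ hσ' (hbij.image_eq ▸ hl)
  rwa [h0, h1, sub_zero, one_mul] at this

theorem surjective_of_le_deriv {f : ℝ → ℝ} (hf : Differentiable ℝ f) {ε : ℝ} (hε : 0 < ε)
    (hf' : ∀ x, ε ≤ deriv f x) : Function.Surjective f := by
  have hgrowth := mul_sub_le_image_sub_of_le_deriv hf hf'
  refine hf.continuous.surjective ?_ ?_
  · refine tendsto_atTop_mono' _ ?_ (tendsto_atTop_add_const_left _ (f 0)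
      (tendsto_id.const_mul_atTop hε))
    simp only [id]
    filter_upwards [eventually_ge_atTop 0] with x hx
    linarith [hgrowth hx]
  · refine tendsto_atBot_mono' _ ?_ (tendsto_atBot_add_const_left _ (f 0)
      (tendsto_id.const_mul_atBot hε))
    simp only [id]
    filter_upwards [eventually_le_atBot 0] with x hx
    linarith [hgrowth hx]

/-- `σ` is the inverse of the normalized primitive `s ↦ (∫₀ˢ g) / ∫₀¹ g`. -/
theorem exists_orderIso_hasDerivAt_integral_div {g : ℝ → ℝ} (hg : Continuous g) {ε : ℝ}
    (hε : 0 < ε) (hgε : ∀ x, ε ≤ g x) :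
    ∃ σ : ℝ ≃o ℝ, σ 0 = 0 ∧ σ 1 = 1 ∧
      ∀ t, HasDerivAt σ ((∫ u in (0:ℝ)..1, g u) / g (σ t)) t := by
  set c := ∫ u in (0:ℝ)..1, g u
  have hgpos : ∀ x, 0 < g x := fun x => hε.trans_le (hgε x)
  have hc : 0 < c := intervalIntegral_pos_of_pos (hg.intervalIntegrable 0 1) hgpos zero_lt_one
  set τ : ℝ → ℝ := fun s => (∫ u in (0:ℝ)..s, g u) / c
  have hτ : ∀ s, HasDerivAt τ (g s / c) s := fun s =>
    (hg.integral_hasStrictDerivAt 0 s).hasDerivAt.div_const c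
  have hτmono : StrictMono τ :=
    strictMono_of_hasDerivAt_pos hτ fun s => div_pos (hgpos s) hc
  have hτsurj : Function.Surjective τ :=
    surjective_of_le_deriv (fun s => (hτ s).differentiableAt) (div_pos hε hc) fun s => by
      rw [(hτ s).deriv]
      exact div_le_div_of_nonneg_right (hgε s) hc.le
  set e := hτmono.orderIsoOfSurjective τ hτsurj
  have he : ∀ s, e s = τ s := fun s => rfl
  refine ⟨e.symm, ?_, ?_, fun t => ?_⟩
  · rw [e.symm_apply_eq, he]
    simp [τ]
  · rw [e.symm_apply_eq, he]
    exact (div_self hc.ne').symm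
  · have hinv := HasDerivAt.of_local_left_inverse e.symm.continuous.continuousAt
      (hτ (e.symm t)) (div_pos (hgpos _) hc).ne'
      (Eventually.of_forall e.apply_symm_apply)
    rwa [inv_div] at hinv

theorem exists_mem_reparamSupSet_le {l : ℝ → ℝ} (hl : ContinuousOn l (Icc 0 1))
    (hl0 : ∀ t ∈ Icc (0:ℝ) 1, 0 ≤ l t) {ε : ℝ} (hε : 0 < ε) :
    ∃ r ∈ reparamSupSet l, r ≤ (∫ t in (0:ℝ)..1, l t) + ε := by
  set p : ℝ → Icc (0:ℝ) 1 := projIcc 0 1 zero_le_one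
  set g : ℝ → ℝ := fun t => l (p t) + ε
  have hg : Continuous g :=
    (hl.comp_continuous (continuous_subtype_val.comp continuous_projIcc)
      fun t => (p t).2).add continuous_const
  have hgε : ∀ t, ε ≤ g t := fun t => le_add_of_nonneg_left (hl0 _ (p t).2)
  have hg_eq : ∀ t ∈ Icc (0:ℝ) 1, g t = l t + ε := fun t ht => by
    simp only [g, p, projIcc_of_mem zero_le_one ht]
  have hgint : ∫ t in (0:ℝ)..1, g t = (∫ t in (0:ℝ)..1, l t) + ε := by
    rw [← uIcc_of_le zero_le_one] at hg_eq hl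
    rw [integral_congr hg_eq, integral_add hl.intervalIntegrable intervalIntegrable_const]
    simp
  obtain ⟨σ, hσ0, hσ1, hσ⟩ := exists_orderIso_hasDerivAt_integral_div hg hε hgε
  rw [hgint] at hσ
  have hσI : BijOn σ (Icc 0 1) (Icc 0 1) := by
    simpa [σ.image_Icc, hσ0, hσ1] using σ.injective.injOn.bijOn_image (s := Icc (0:ℝ) 1)
  have hgpos : ∀ t, 0 < g t := fun t => hε.trans_le (hgε t)
  have hc : 0 < (∫ t in (0:ℝ)..1, l t) + ε :=
    hgint ▸ intervalIntegral_pos_of_pos (hg.intervalIntegrable 0 1) hgpos zero_lt_one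
  refine ⟨_, ⟨σ, fun t => ((∫ t in (0:ℝ)..1, l t) + ε) / g (σ t), hσ0, hσ1, hσI,
    fun t _ => (hσ t).hasDerivWithinAt,
    (continuous_const.div (hg.comp σ.continuous) fun t => (hgpos _).ne').continuousOn,
    fun t _ => div_pos hc (hgpos _), rfl⟩, ?_⟩
  refine csSup_le ((nonempty_Icc.2 zero_le_one).image _) ?_
  rintro _ ⟨t, ht, rfl⟩
  have hlσ := hl0 _ (hσI.mapsTo ht)
  dsimp only
  rw [hg_eq _ (hσI.mapsTo ht), mul_div_assoc', div_le_iff₀ (by linarith)]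
  nlinarith

/-- The infimum over all C¹ diffeomorphisms `σ` of `[0,1]` fixing the endpoints of
`sup_{t ∈ [0,1]} l (σ t) * σ' t` equals `∫₀¹ l`. -/
theorem stmt_11 (l : ℝ → ℝ) (hl : ContinuousOn l (Set.Icc 0 1))
    (hl0 : ∀ t ∈ Set.Icc (0:ℝ) 1, 0 ≤ l t) :
    sInf {r : ℝ | ∃ σ σ' : ℝ → ℝ,
        σ 0 = 0 ∧ σ 1 = 1 ∧
        Set.BijOn σ (Set.Icc 0 1) (Set.Icc 0 1) ∧
        (∀ t ∈ Set.Icc (0:ℝ) 1, HasDerivWithinAt σ (σ' t) (Set.Icc 0 1) t) ∧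
        ContinuousOn σ' (Set.Icc 0 1) ∧
        (∀ t ∈ Set.Icc (0:ℝ) 1, 0 < σ' t) ∧
        r = sSup ((fun t => l (σ t) * σ' t) '' Set.Icc 0 1)} =
      ∫ t in (0:ℝ)..1, l t := by
  change sInf (reparamSupSet l) = _
  obtain ⟨r₀, hr₀, -⟩ := exists_mem_reparamSupSet_le hl hl0 one_pos
  refine csInf_eq_of_forall_ge_of_forall_gt_exists_lt ⟨r₀, hr₀⟩
    (fun r hr => integral_le_of_mem_reparamSupSet hl hr) fun w hw => ?_
  obtain ⟨r, hr, hrw⟩ := exists_mem_reparamSupSet_le hl hl0 (half_pos (sub_pos.2 hw))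
  exact ⟨r, hr, by linarith⟩
end
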